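/- arXiv:cond-mat/0003123 — 2 statements merged into one kernel-verified Lean document; each statement's English description precedes it below -/
import Mathlib

section
/- Assume condition (NA₁): for any bonds (c_1,m_1,p_1),...,(c_B,m_B,p_B) in the set 𝒯 and any q ∈ ℝ^B, if Σ_j q_j φ(c_j,m_j) = 0 then Σ_j q_j p_j = 0. If 𝒯 is a complete coupon term structure with payment dates t_1 < ... < t_N and contains at least N bonds, then there exist real numbers d_1,...,d_N such that for every bond (c,m,p) ∈ 𝒯, p = Σ_{i=1}^N d_i φ_i(c,m). -/
open scoped Classical in
noncomputable def cashflow {N : ℕ} (t : Fin N → ℝ) (c m : ℝ) (i : Fin N) : ℝ :=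
  if t i = m then 100 + c
  else if ∃ k : ℕ, 0 < k ∧ t i = m - (k : ℝ) / 2 then c
  else 0

theorem stmt1 {N : ℕ} (T : Finset (ℝ × ℝ × ℝ)) (t : Fin N → ℝ)
    (ht : StrictMono t) (htpos : ∀ i, 0 < t i)
    (hbonds : ∀ b ∈ T, 0 ≤ b.1 ∧ 0 < b.2.1 ∧ 0 < b.2.2)
    -- every coupon payment date of a bond in T occurs among t₁,…,t_N
    (hcover : ∀ b ∈ T, ∀ k : ℕ, 0 < b.2.1 - (k : ℝ) / 2 → ∃ i, t i = b.2.1 - (k : ℝ) / 2)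
    -- complete coupon term structure: a bond matures on each payment date
    (hcomplete : ∀ i : Fin N, ∃ b ∈ T, b.2.1 = t i)
    (hcard : N ≤ T.card)
    -- condition (NA₁)
    (hNA1 : ∀ (B : ℕ) (bd : Fin B → ℝ × ℝ × ℝ) (q : Fin B → ℝ),
      (∀ j, bd j ∈ T) →
      (∀ i, ∑ j, q j * cashflow t (bd j).1 (bd j).2.1 i = 0) →
      ∑ j, q j * (bd j).2.2 = 0) :
    ∃ d : Fin N → ℝ, ∀ b ∈ T, b.2.2 = ∑ i, d i * cashflow t b.1 b.2.1 i := by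
  classical
  set φ : T → (Fin N → ℝ) := fun b => cashflow t b.1.1 b.1.2.1 with hφdef
  set pr : T → ℝ := fun b => b.1.2.2 with hprdef
  let L : (T → ℝ) →ₗ[ℝ] (Fin N → ℝ) :=
    ∑ b : T, (LinearMap.proj b).smulRight (φ b)
  let P : (T → ℝ) →ₗ[ℝ] ℝ :=
    ∑ b : T, (LinearMap.proj b).smulRight (pr b)
  have hL : ∀ q, L q = ∑ b : T, q b • φ b := by
    intro q; simp [L, LinearMap.sum_apply]
  have hP : ∀ q, P q = ∑ b : T, q b * pr b := by
    intro q; simp [P, LinearMap.sum_apply, smul_eq_mul]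
  have hle : LinearMap.ker L ≤ LinearMap.ker P := by
    intro q hq
    simp only [LinearMap.mem_ker] at hq ⊢
    let e := (Fintype.equivFin T).symm
    rw [hP]
    have key := hNA1 (Fintype.card T) (fun j => (e j).1) (fun j => q (e j))
      (fun j => (e j).2) ?_
    · rw [← key]
      exact (Equiv.sum_comp e (fun b => q b * pr b)).symm
    · intro i
      have hqi := congrFun hq i
      rw [hL] at hqi
      simp only [Finset.sum_apply, Pi.smul_apply, smul_eq_mul, Pi.zero_apply] at hqi
      rw [← hqi]
      exact Equiv.sum_comp e (fun b => q b * φ b i)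
  let g : LinearMap.range L →ₗ[ℝ] ℝ :=
    (Submodule.liftQ (LinearMap.ker L) P hle).comp
      (LinearMap.quotKerEquivRange L).symm.toLinearMap
  have hg : ∀ q : T → ℝ, g ⟨L q, LinearMap.mem_range_self L q⟩ = P q := by
    intro q
    have h1 : (LinearMap.quotKerEquivRange L).symm ⟨L q, LinearMap.mem_range_self L q⟩
        = Submodule.Quotient.mk q := by
      rw [LinearEquiv.symm_apply_eq]
      exact Subtype.ext (L.quotKerEquivRange_apply_mk q).symm
    simp only [g, LinearMap.comp_apply, LinearEquiv.coe_toLinearMap, h1,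
      Submodule.liftQ_apply]
  obtain ⟨h, hh⟩ := g.exists_extend
  have hval : ∀ b : T, h (φ b) = pr b := by
    intro b
    have hLq : L (Pi.single b 1) = φ b := by
      rw [hL]
      rw [Finset.sum_eq_single b]
      · simp
      · intro c _ hc; simp [Pi.single_apply, hc]
      · simp
    have : h (φ b) = g ⟨φ b, ⟨Pi.single b 1, hLq⟩⟩ := by
      have := congrFun (congrArg (fun f => f.toFun) hh) ⟨φ b, ⟨Pi.single b 1, hLq⟩⟩
      simpa using this
    rw [this]
    have : (⟨φ b, ⟨Pi.single b 1, hLq⟩⟩ : LinearMap.range L)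
        = ⟨L (Pi.single b 1), LinearMap.mem_range_self L _⟩ := Subtype.ext hLq.symm
    rw [this, hg, hP]
    rw [Finset.sum_eq_single b]
    · simp
    · intro c _ hc; simp [Pi.single_apply, hc]
    · simp
  refine ⟨fun i => h (Pi.single i 1), ?_⟩
  intro b hb
  have := hval ⟨b, hb⟩
  have hx : (φ ⟨b, hb⟩ : Fin N → ℝ)
      = ∑ i, φ ⟨b, hb⟩ i • (Pi.single i 1 : Fin N → ℝ) := by
    funext j
    simp [Pi.single_apply, Finset.sum_ite_eq, mul_comm]
  calc b.2.2 = pr ⟨b, hb⟩ := rfl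
    _ = h (φ ⟨b, hb⟩) := (hval ⟨b, hb⟩).symm
    _ = h (∑ i, φ ⟨b, hb⟩ i • (Pi.single i 1 : Fin N → ℝ)) := by rw [← hx]
    _ = ∑ i, φ ⟨b, hb⟩ i • h (Pi.single i 1 : Fin N → ℝ) := by
        rw [map_sum]; simp [map_smul]
    _ = ∑ i, h (Pi.single i 1 : Fin N → ℝ) * cashflow t b.1 b.2.1 i := by
        apply Finset.sum_congr rfl; intro i _
        simp [φ, smul_eq_mul, mul_comm]
end

section
/- Under condition (NA₁), the discount factors are uniquely determined: if Φ and Φ̃ are two N×N cash-flow matrices obtained by choosing, for each payment date t_j, possibly different bonds from 𝒯 maturing at t_j (with prices p_j and p̃_j respectively), then the vectors d_i = Σ_j p_j (Φ^{-1})_{ji} and d̃_i = Σ_j p̃_j (Φ̃^{-1})_{ji} coincide. -/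
theorem stmt2 {N : ℕ} (T : Finset (ℝ × ℝ × ℝ)) (t : Fin N → ℝ)
    (ht : StrictMono t) (htpos : ∀ i, 0 < t i)
    (hbonds : ∀ b ∈ T, 0 ≤ b.1 ∧ 0 < b.2.1 ∧ 0 < b.2.2)
    (hcover : ∀ b ∈ T, ∀ k : ℕ, 0 < b.2.1 - (k : ℝ) / 2 → ∃ i, t i = b.2.1 - (k : ℝ) / 2)
    -- condition (NA₁)
    (hNA1 : ∀ (B : ℕ) (bd : Fin B → ℝ × ℝ × ℝ) (q : Fin B → ℝ),
      (∀ j, bd j ∈ T) →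
      (∀ i, ∑ j, q j * cashflow t (bd j).1 (bd j).2.1 i = 0) →
      ∑ j, q j * (bd j).2.2 = 0)
    -- two (possibly different) selections of bonds maturing at each date t j
    (bd bd' : Fin N → ℝ × ℝ × ℝ)
    (hbd : ∀ j, bd j ∈ T) (hbd' : ∀ j, bd' j ∈ T)
    (hm : ∀ j, (bd j).2.1 = t j) (hm' : ∀ j, (bd' j).2.1 = t j)
    (Φ Φ' : Matrix (Fin N) (Fin N) ℝ)
    (hΦ : ∀ i j, Φ i j = cashflow t (bd j).1 (bd j).2.1 i)
    (hΦ' : ∀ i j, Φ' i j = cashflow t (bd' j).1 (bd' j).2.1 i)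
    (hU : IsUnit Φ.det) (hU' : IsUnit Φ'.det) :
    ∀ i, ∑ j, (bd j).2.2 * Φ⁻¹ j i = ∑ j, (bd' j).2.2 * Φ'⁻¹ j i := by
  intro i
  have key := hNA1 (N + N)
    (Fin.addCases bd bd')
    (Fin.addCases (fun j => Φ⁻¹ j i) (fun j => -(Φ'⁻¹ j i)))
    (by
      intro j
      refine Fin.addCases (fun j => ?_) (fun j => ?_) j
      · simpa only [Fin.addCases_left] using hbd j
      · simpa only [Fin.addCases_right] using hbd' j)
    (by
      intro k
      rw [Fin.sum_univ_add]
      simp only [Fin.addCases_left, Fin.addCases_right]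
      have h1 : ∑ j : Fin N, Φ⁻¹ j i * cashflow t (bd j).1 (bd j).2.1 k
          = (Φ * Φ⁻¹) k i := by
        rw [Matrix.mul_apply]
        exact Finset.sum_congr rfl fun j _ => by rw [hΦ]; ring
      have h2 : ∑ j : Fin N, -(Φ'⁻¹ j i) * cashflow t (bd' j).1 (bd' j).2.1 k
          = -((Φ' * Φ'⁻¹) k i) := by
        rw [Matrix.mul_apply, ← Finset.sum_neg_distrib]
        exact Finset.sum_congr rfl fun j _ => by rw [hΦ']; ring
      rw [h1, h2, Matrix.mul_nonsing_inv _ hU, Matrix.mul_nonsing_inv _ hU']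
      ring)
  rw [Fin.sum_univ_add] at key
  simp only [Fin.addCases_left, Fin.addCases_right] at key
  have e1 : ∑ j, (bd j).2.2 * Φ⁻¹ j i = ∑ j : Fin N, Φ⁻¹ j i * (bd j).2.2 :=
    Finset.sum_congr rfl fun j _ => mul_comm _ _
  have e2 : ∑ j, (bd' j).2.2 * Φ'⁻¹ j i = ∑ j : Fin N, Φ'⁻¹ j i * (bd' j).2.2 :=
    Finset.sum_congr rfl fun j _ => mul_comm _ _
  have e3 : ∑ j : Fin N, -(Φ'⁻¹ j i) * (bd' j).2.2
      = -∑ j : Fin N, Φ'⁻¹ j i * (bd' j).2.2 := by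
    rw [← Finset.sum_neg_distrib]
    exact Finset.sum_congr rfl fun j _ => by ring
  rw [e3] at key
  rw [e1, e2]
  linarith
end
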